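/- arXiv:1711.05442 — 3 statements merged into one kernel-verified Lean document; each statement's English description precedes it below -/
import Mathlib

section
/- Let A = {A_1,...,A_d} ⊆ F ⊆ 2^[n] be an (i,j)-unstable family such that the subfamily A_{īj̄} of members containing neither i nor j is nonempty. Let G = {A ∈ A_{ij̄} : S_ji(A) = A} (members containing i but not j that are fixed by the (j,i)-shift) and G' = {(A \ {i}) ∪ {j} : A ∈ G}. Then G ≠ A_{ij̄}, and B = A_{īj} ∪ A_{īj̄} ∪ (A_{ij̄} \ G) ∪ G' is a (j,i)-unstable family of d sets contained in F. -/
open Finset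

def shift {n : ℕ} (F : Finset (Finset (Fin n))) (i j : Fin n) (A : Finset (Fin n)) : Finset (Fin n) :=
  if j ∈ A ∧ i ∉ A ∧ insert i (A.erase j) ∉ F then insert i (A.erase j) else A

/-- `F` is `(d,s,t)`-conditionally intersecting: any `d` distinct members whose union has
size at most `s` have intersection of size at least `t`. -/
def CondIntersecting {n : ℕ} (F : Finset (Finset (Fin n))) (d s t : ℕ) : Prop :=
  ∀ S ⊆ F, S.card = d → (S.sup id).card ≤ s → t ≤ (S.inf id).card

/-- A subfamily `S` of `F` consisting of `d` distinct sets is `(i,j)`-unstable if it is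
`(d,s,t)`-conditionally intersecting but its image under the `(i,j)`-shift (w.r.t. `F`) is not. -/
def Unstable {n : ℕ} (F S : Finset (Finset (Fin n))) (d s t : ℕ) (i j : Fin n) : Prop :=
  CondIntersecting S d s t ∧ ¬ CondIntersecting (S.image (shift F i j)) d s t

lemma shift_cases {n : ℕ} (F : Finset (Finset (Fin n))) (i j : Fin n) (A : Finset (Fin n)) :
    shift F i j A = A ∨
    (j ∈ A ∧ i ∉ A ∧ insert i (A.erase j) ∉ F ∧ shift F i j A = insert i (A.erase j)) := by
  unfold shift
  split_ifs with h
  · exact Or.inr ⟨h.1, h.2.1, h.2.2, rfl⟩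
  · exact Or.inl rfl

lemma shift_fixed {n : ℕ} {F : Finset (Finset (Fin n))} {i j : Fin n} {A : Finset (Fin n)}
    (h : ¬ (j ∈ A ∧ i ∉ A)) : shift F i j A = A := by
  unfold shift
  rw [if_neg (fun hc => h ⟨hc.1, hc.2.1⟩)]

lemma gA_recover {n : ℕ} {i j : Fin n} {A : Finset (Fin n)} (hi : i ∉ A) (hj : j ∈ A) :
    insert j ((insert i (A.erase j)).erase i) = A := by
  rw [Finset.erase_insert (fun h => hi (Finset.mem_of_mem_erase h)), Finset.insert_erase hj]

lemma shift_injOn {n : ℕ} (F S : Finset (Finset (Fin n))) (i j : Fin n) (hSF : S ⊆ F) :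
    Set.InjOn (shift F i j) ↑S := by
  intro A hA B hB hAB
  rcases shift_cases F i j A with hA' | ⟨hjA, hiA, hFA, hA'⟩ <;>
    rcases shift_cases F i j B with hB' | ⟨hjB, hiB, hFB, hB'⟩
  · rw [hA', hB'] at hAB; exact hAB
  · exfalso
    rw [hA', hB'] at hAB
    exact hFB (hAB ▸ hSF hA)
  · exfalso
    rw [hA', hB'] at hAB
    exact hFA (hAB.symm ▸ hSF hB)
  · rw [hA', hB'] at hAB
    have h2 : insert j ((insert i (A.erase j)).erase i)
        = insert j ((insert i (B.erase j)).erase i) := by rw [hAB]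
    rw [gA_recover hiA hjA, gA_recover hiB hjB] at h2
    exact h2

theorem stmt13 {n d s t : ℕ} (F S : Finset (Finset (Fin n))) (i j : Fin n)
    (hSF : S ⊆ F) (hcard : S.card = d)
    (hF : CondIntersecting F d s t)
    (hU : Unstable F S d s t i j)
    (hne : (S.filter fun A => i ∉ A ∧ j ∉ A).Nonempty) :
    (S.filter fun A => i ∈ A ∧ j ∉ A).filter (fun A => shift F j i A = A) ≠
      S.filter (fun A => i ∈ A ∧ j ∉ A) ∧
    ((S.filter fun A => j ∈ A ∧ i ∉ A ∧ insert i (A.erase j) ∉ F) ∪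
        (S.filter fun A => i ∉ A ∧ j ∉ A) ∪
        ((S.filter fun A => i ∈ A ∧ j ∉ A) \
          ((S.filter fun A => i ∈ A ∧ j ∉ A).filter fun A => shift F j i A = A)) ∪
        (((S.filter fun A => i ∈ A ∧ j ∉ A).filter fun A => shift F j i A = A).image
          fun A => insert j (A.erase i))) ⊆ F ∧
    ((S.filter fun A => j ∈ A ∧ i ∉ A ∧ insert i (A.erase j) ∉ F) ∪
        (S.filter fun A => i ∉ A ∧ j ∉ A) ∪
        ((S.filter fun A => i ∈ A ∧ j ∉ A) \
          ((S.filter fun A => i ∈ A ∧ j ∉ A).filter fun A => shift F j i A = A)) ∪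
        (((S.filter fun A => i ∈ A ∧ j ∉ A).filter fun A => shift F j i A = A).image
          fun A => insert j (A.erase i))).card = d ∧
    Unstable F
      ((S.filter fun A => j ∈ A ∧ i ∉ A ∧ insert i (A.erase j) ∉ F) ∪
        (S.filter fun A => i ∉ A ∧ j ∉ A) ∪
        ((S.filter fun A => i ∈ A ∧ j ∉ A) \
          ((S.filter fun A => i ∈ A ∧ j ∉ A).filter fun A => shift F j i A = A)) ∪
        (((S.filter fun A => i ∈ A ∧ j ∉ A).filter fun A => shift F j i A = A).image
          fun A => insert j (A.erase i)))
      d s t j i := by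
  classical
  obtain ⟨hCI, hnCI⟩ := hU
  set P := S.filter (fun A => j ∈ A ∧ i ∉ A ∧ insert i (A.erase j) ∉ F) with hPdef
  set Q := S.filter (fun A => i ∉ A ∧ j ∉ A) with hQdef
  set R := S.filter (fun A => i ∈ A ∧ j ∉ A) with hRdef
  set G := R.filter (fun A => shift F j i A = A) with hGdef
  -- basic membership facts
  have hPmem : ∀ A ∈ P, A ∈ S ∧ j ∈ A ∧ i ∉ A ∧ insert i (A.erase j) ∉ F := by
    intro A hA; rw [hPdef, Finset.mem_filter] at hA; tauto
  have hQmem : ∀ A ∈ Q, A ∈ S ∧ i ∉ A ∧ j ∉ A := by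
    intro A hA; rw [hQdef, Finset.mem_filter] at hA; tauto
  have hRmem : ∀ A ∈ R, A ∈ S ∧ i ∈ A ∧ j ∉ A := by
    intro A hA; rw [hRdef, Finset.mem_filter] at hA; tauto
  have hGR : G ⊆ R := by rw [hGdef]; exact Finset.filter_subset _ _
  -- i ≠ j
  have hij : i ≠ j := by
    rintro rfl
    apply hnCI
    have himg : S.image (shift F i i) = S := by
      have : ∀ A ∈ S, shift F i i A = id A := by
        intro A _; exact shift_fixed (fun h => h.2 h.1)
      rw [Finset.image_congr this, Finset.image_id]
    rwa [himg]
  -- unpack non-cond-intersecting witness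
  unfold CondIntersecting at hnCI
  push_neg at hnCI
  obtain ⟨T0, hT0sub, hT0card, hT0sup, hT0inf⟩ := hnCI
  have hinj := shift_injOn F S i j hSF
  have himgcard : (S.image (shift F i j)).card = d := by
    rw [Finset.card_image_of_injOn hinj, hcard]
  have hT0eq : T0 = S.image (shift F i j) :=
    Finset.eq_of_subset_of_card_le hT0sub (by rw [himgcard, hT0card])
  subst hT0eq
  -- the fixed set A0
  obtain ⟨A0, hA0⟩ := hne
  have hA0S : A0 ∈ S := (hQmem A0 hA0).1
  have hiA0 : i ∉ A0 := (hQmem A0 hA0).2.1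
  have hjA0 : j ∉ A0 := (hQmem A0 hA0).2.2
  have hA0fix : shift F i j A0 = A0 := shift_fixed (fun h => hjA0 h.1)
  have hA0img : A0 ∈ S.image (shift F i j) := by
    have := Finset.mem_image_of_mem (shift F i j) hA0S
    rwa [hA0fix] at this
  -- intersections coincide
  have hinf_eq : (S.image (shift F i j)).inf id = S.inf id := by
    apply le_antisymm
    · apply Finset.le_inf
      intro A hA
      refine Finset.le_iff_subset.mpr ?_
      intro x hx
      have hxA0 : x ∈ A0 := (Finset.le_iff_subset.mp (Finset.inf_le hA0img)) hx
      have hxi : x ≠ i := fun h => hiA0 (h ▸ hxA0)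
      have hxσ : x ∈ shift F i j A :=
        (Finset.le_iff_subset.mp (Finset.inf_le (Finset.mem_image_of_mem _ hA))) hx
      rcases shift_cases F i j A with h | ⟨_, _, _, h⟩
      · rwa [h] at hxσ
      · rw [h] at hxσ
        rcases Finset.mem_insert.mp hxσ with h' | h'
        · exact absurd h' hxi
        · exact Finset.mem_of_mem_erase h'
    · apply Finset.le_inf
      intro C hC
      obtain ⟨A, hA, rfl⟩ := Finset.mem_image.mp hC
      refine Finset.le_iff_subset.mpr ?_
      intro x hx
      have hxA0 : x ∈ A0 := (Finset.le_iff_subset.mp (Finset.inf_le hA0S)) hx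
      have hxj : x ≠ j := fun h => hjA0 (h ▸ hxA0)
      have hxA : x ∈ A := (Finset.le_iff_subset.mp (Finset.inf_le hA)) hx
      show x ∈ shift F i j A
      rcases shift_cases F i j A with h | ⟨_, _, _, h⟩
      · rw [h]; exact hxA
      · rw [h]; exact Finset.mem_insert_of_mem (Finset.mem_erase.mpr ⟨hxj, hxA⟩)
  have hinf_lt : (S.inf id).card < t := by rw [← hinf_eq]; exact hT0inf
  have hsup_gt : s < (S.sup id).card := by
    by_contra h
    push_neg at h
    exact absurd (hCI S Finset.Subset.rfl hcard h) (Nat.not_le.mpr hinf_lt)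
  -- union relations
  have hsub1 : S.sup id ⊆ insert j ((S.image (shift F i j)).sup id) := by
    intro x hx
    rw [Finset.mem_sup] at hx
    obtain ⟨A, hA, hxA⟩ := hx
    simp only [id_eq] at hxA
    by_cases hxj : x = j
    · simp [hxj]
    · apply Finset.mem_insert_of_mem
      rw [Finset.mem_sup]
      refine ⟨shift F i j A, Finset.mem_image_of_mem _ hA, ?_⟩
      simp only [id_eq]
      rcases shift_cases F i j A with h | ⟨_, _, _, h⟩
      · rw [h]; exact hxA
      · rw [h]; exact Finset.mem_insert_of_mem (Finset.mem_erase.mpr ⟨hxj, hxA⟩)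
  have hScard : (S.sup id).card = s + 1 := by
    have h1 := Finset.card_le_card hsub1
    have h2 := Finset.card_insert_le j ((S.image (shift F i j)).sup id)
    omega
  have hjS' : j ∉ (S.image (shift F i j)).sup id := by
    intro h
    have hsub : S.sup id ⊆ (S.image (shift F i j)).sup id := by
      rwa [Finset.insert_eq_self.mpr h] at hsub1
    have := Finset.card_le_card hsub
    omega
  have hjkey : ∀ A ∈ S, j ∈ A →
      i ∉ A ∧ insert i (A.erase j) ∉ F ∧ shift F i j A = insert i (A.erase j) := by
    intro A hA hjA
    rcases shift_cases F i j A with h | ⟨_, h2, h3, h4⟩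
    · exfalso
      apply hjS'
      rw [Finset.mem_sup]
      exact ⟨shift F i j A, Finset.mem_image_of_mem _ hA, by rw [id_eq, h]; exact hjA⟩
    · exact ⟨h2, h3, h4⟩
  have hjS : j ∈ S.sup id := by
    by_contra h
    have hsub : S.sup id ⊆ (S.image (shift F i j)).sup id := by
      intro x hx
      rcases Finset.mem_insert.mp (hsub1 hx) with h' | h'
      · exact absurd (h' ▸ hx) h
      · exact h'
    have := Finset.card_le_card hsub
    omega
  obtain ⟨A1, hA1S, hjA1⟩ : ∃ A ∈ S, j ∈ A := by
    rw [Finset.mem_sup] at hjS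
    obtain ⟨A, hA, h⟩ := hjS
    exact ⟨A, hA, h⟩
  have hiS' : i ∈ (S.image (shift F i j)).sup id := by
    obtain ⟨_, _, h4⟩ := hjkey A1 hA1S hjA1
    rw [Finset.mem_sup]
    exact ⟨shift F i j A1, Finset.mem_image_of_mem _ hA1S,
      by rw [id_eq, h4]; exact Finset.mem_insert_self _ _⟩
  have hiS : i ∈ S.sup id := by
    by_contra h
    have hsub2 : insert i ((S.sup id).erase j) ⊆ (S.image (shift F i j)).sup id := by
      intro x hx
      rcases Finset.mem_insert.mp hx with rfl | hx
      · exact hiS'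
      · obtain ⟨hxj, hxS⟩ := Finset.mem_erase.mp hx
        rw [Finset.mem_sup] at hxS ⊢
        obtain ⟨A, hA, hxA⟩ := hxS
        simp only [id_eq] at hxA ⊢
        refine ⟨shift F i j A, Finset.mem_image_of_mem _ hA, ?_⟩
        rcases shift_cases F i j A with h' | ⟨_, _, _, h'⟩
        · rw [h']; exact hxA
        · rw [h']; exact Finset.mem_insert_of_mem (Finset.mem_erase.mpr ⟨hxj, hxA⟩)
    have hcard2 := Finset.card_le_card hsub2
    rw [Finset.card_insert_of_notMem (fun hmem => h (Finset.mem_of_mem_erase hmem)),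
      Finset.card_erase_of_mem hjS] at hcard2
    omega
  -- partition of S
  have hPiff : ∀ A, A ∈ P ↔ A ∈ S ∧ j ∈ A := by
    intro A
    constructor
    · intro hA; exact ⟨(hPmem A hA).1, (hPmem A hA).2.1⟩
    · rintro ⟨h1, h2⟩
      obtain ⟨a, b, _⟩ := hjkey A h1 h2
      rw [hPdef, Finset.mem_filter]
      exact ⟨h1, h2, a, b⟩
  have hunion : P ∪ Q ∪ R = S := by
    ext A
    constructor
    · intro hA
      rcases Finset.mem_union.mp hA with hA | hA
      · rcases Finset.mem_union.mp hA with hA | hA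
        · exact (hPmem A hA).1
        · exact (hQmem A hA).1
      · exact (hRmem A hA).1
    · intro hA
      by_cases hj : j ∈ A
      · exact Finset.mem_union_left _ (Finset.mem_union_left _ ((hPiff A).mpr ⟨hA, hj⟩))
      · by_cases hi : i ∈ A
        · exact Finset.mem_union_right _ (by rw [hRdef, Finset.mem_filter]; exact ⟨hA, hi, hj⟩)
        · exact Finset.mem_union_left _ (Finset.mem_union_right _
            (by rw [hQdef, Finset.mem_filter]; exact ⟨hA, hi, hj⟩))
  have hPQdisj : Disjoint P Q := by
    rw [Finset.disjoint_left]
    intro A hA hA'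
    exact (hQmem A hA').2.2 (hPmem A hA).2.1
  have hPRdisj : Disjoint P R := by
    rw [Finset.disjoint_left]
    intro A hA hA'
    exact (hPmem A hA).2.2.1 (hRmem A hA').2.1
  have hQRdisj : Disjoint Q R := by
    rw [Finset.disjoint_left]
    intro A hA hA'
    exact (hQmem A hA).2.1 (hRmem A hA').2.1
  have hcards : P.card + Q.card + R.card = d := by
    rw [← Finset.card_union_of_disjoint hPQdisj,
      ← Finset.card_union_of_disjoint (Finset.disjoint_union_left.mpr ⟨hPRdisj, hQRdisj⟩),
      hunion, hcard]
  -- facts about G and the map g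
  have hGmem : ∀ A ∈ G, A ∈ S ∧ i ∈ A ∧ j ∉ A ∧ insert j (A.erase i) ∈ F := by
    intro A hA
    rw [hGdef, Finset.mem_filter] at hA
    obtain ⟨hAR, hfix⟩ := hA
    obtain ⟨hAS, hiA, hjA⟩ := hRmem A hAR
    refine ⟨hAS, hiA, hjA, ?_⟩
    by_contra hc
    have hsh : shift F j i A = insert j (A.erase i) := by
      unfold shift; rw [if_pos ⟨hiA, hjA, hc⟩]
    rw [hfix] at hsh
    exact hjA (by rw [hsh]; exact Finset.mem_insert_self _ _)
  have hgnotP : ∀ A, A ∈ F → i ∈ A → j ∉ A → insert j (A.erase i) ∉ P := by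
    intro A hAF hiA hjA hmem
    have := (hPmem _ hmem).2.2.2
    apply this
    rw [gA_recover hjA hiA]
    exact hAF
  have hginj : Set.InjOn (fun A : Finset (Fin n) => insert j (A.erase i)) ↑R := by
    intro A hA B hB hAB
    simp only at hAB
    obtain ⟨_, hiA, hjA⟩ := hRmem A hA
    obtain ⟨_, hiB, hjB⟩ := hRmem B hB
    have h2 : insert i ((insert j (A.erase i)).erase j)
        = insert i ((insert j (B.erase i)).erase j) := by rw [hAB]
    rw [gA_recover hjA hiA, gA_recover hjB hiB] at h2
    exact h2
  have himgmem : ∀ C ∈ R.image (fun A => insert j (A.erase i)),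
      j ∈ C ∧ i ∉ C ∧ C ∉ P := by
    intro C hC
    obtain ⟨A, hA, rfl⟩ := Finset.mem_image.mp hC
    obtain ⟨hAS, hiA, hjA⟩ := hRmem A hA
    refine ⟨Finset.mem_insert_self _ _, ?_, hgnotP A (hSF hAS) hiA hjA⟩
    intro hmem
    rcases Finset.mem_insert.mp hmem with h | h
    · exact hij h
    · exact (Finset.notMem_erase i A) h
  -- the family T = P ∪ Q ∪ g(R)
  set T := P ∪ Q ∪ R.image (fun A => insert j (A.erase i)) with hTdef
  have hTcard : T.card = d := by
    have hd1 : Disjoint (P ∪ Q) (R.image (fun A => insert j (A.erase i))) := by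
      rw [Finset.disjoint_left]
      intro C hC hC'
      obtain ⟨hjC, hiC, hCP⟩ := himgmem C hC'
      rcases Finset.mem_union.mp hC with h | h
      · exact hCP h
      · exact (hQmem C h).2.2 hjC
    rw [hTdef, Finset.card_union_of_disjoint hd1, Finset.card_union_of_disjoint hPQdisj,
      Finset.card_image_of_injOn hginj]
    omega
  have hTsup : (T.sup id).card ≤ s := by
    have hsub : T.sup id ⊆ (S.sup id).erase i := by
      intro x hx
      rw [Finset.mem_sup] at hx
      obtain ⟨C, hC, hxC⟩ := hx
      simp only [id_eq] at hxC
      rw [Finset.mem_erase]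
      rw [hTdef] at hC
      rcases Finset.mem_union.mp hC with hC | hC
      · have hCS : C ∈ S := by
          rcases Finset.mem_union.mp hC with h | h
          · exact (hPmem C h).1
          · exact (hQmem C h).1
        have hiC : i ∉ C := by
          rcases Finset.mem_union.mp hC with h | h
          · exact (hPmem C h).2.2.1
          · exact (hQmem C h).2.1
        refine ⟨fun h => hiC (h ▸ hxC), ?_⟩
        rw [Finset.mem_sup]
        exact ⟨C, hCS, hxC⟩
      · obtain ⟨A, hA, rfl⟩ := Finset.mem_image.mp hC
        obtain ⟨hAS, hiA, hjA⟩ := hRmem A hA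
        rcases Finset.mem_insert.mp hxC with rfl | hx'
        · exact ⟨fun h => hij h.symm, hjS⟩
        · refine ⟨Finset.ne_of_mem_erase hx', ?_⟩
          rw [Finset.mem_sup]
          exact ⟨A, hAS, Finset.mem_of_mem_erase hx'⟩
    have := Finset.card_le_card hsub
    rw [Finset.card_erase_of_mem hiS] at this
    omega
  have hTinf : (T.inf id).card < t := by
    have hQT : Q ⊆ T := by
      rw [hTdef]
      intro x hx
      exact Finset.mem_union_left _ (Finset.mem_union_right _ hx)
    have hA0T : A0 ∈ T := by
      rw [hTdef]
      exact Finset.mem_union_left _ (Finset.mem_union_right _ hA0)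
    have hsub : T.inf id ⊆ S.inf id := by
      refine Finset.le_iff_subset.mp (Finset.le_inf ?_)
      intro A hA
      refine Finset.le_iff_subset.mpr ?_
      intro x hx
      have hxA0 : x ∈ A0 := (Finset.le_iff_subset.mp (Finset.inf_le hA0T)) hx
      have hxj : x ≠ j := fun h => hjA0 (h ▸ hxA0)
      show x ∈ A
      by_cases hj : j ∈ A
      · have hAP : A ∈ P := (hPiff A).mpr ⟨hA, hj⟩
        have hAT : A ∈ T := by
          rw [hTdef]
          exact Finset.mem_union_left _ (Finset.mem_union_left _ hAP)
        exact (Finset.le_iff_subset.mp (Finset.inf_le hAT)) hx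
      · by_cases hi : i ∈ A
        · have hAR : A ∈ R := by rw [hRdef, Finset.mem_filter]; exact ⟨hA, hi, hj⟩
          have hgT : insert j (A.erase i) ∈ T := by
            rw [hTdef]
            exact Finset.mem_union_right _ (Finset.mem_image_of_mem _ hAR)
          have hxg : x ∈ insert j (A.erase i) :=
            (Finset.le_iff_subset.mp (Finset.inf_le hgT)) hx
          rcases Finset.mem_insert.mp hxg with h | h
          · exact absurd h hxj
          · exact Finset.mem_of_mem_erase h
        · have hAQ : A ∈ Q := by rw [hQdef, Finset.mem_filter]; exact ⟨hA, hi, hj⟩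
          exact (Finset.le_iff_subset.mp (Finset.inf_le (hQT hAQ))) hx
    have := Finset.card_le_card hsub
    omega
  -- Claim 1 : G ≠ R
  have hclaim1 : G ≠ R := by
    intro hGReq
    have hTF : T ⊆ F := by
      rw [hTdef]
      intro C hC
      rcases Finset.mem_union.mp hC with hC | hC
      · rcases Finset.mem_union.mp hC with h | h
        · exact hSF (hPmem C h).1
        · exact hSF (hQmem C h).1
      · rw [← hGReq] at hC
        obtain ⟨A, hA, rfl⟩ := Finset.mem_image.mp hC
        exact (hGmem A hA).2.2.2
    exact absurd (hF T hTF hTcard hTsup) (Nat.not_le.mpr hTinf)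
  -- the family B
  set B := P ∪ Q ∪ (R \ G) ∪ G.image (fun A => insert j (A.erase i)) with hBdef
  have hBF : B ⊆ F := by
    rw [hBdef]
    intro C hC
    rcases Finset.mem_union.mp hC with hC | hC
    · rcases Finset.mem_union.mp hC with hC | hC
      · rcases Finset.mem_union.mp hC with h | h
        · exact hSF (hPmem C h).1
        · exact hSF (hQmem C h).1
      · exact hSF (hRmem C (Finset.mem_sdiff.mp hC).1).1
    · obtain ⟨A, hA, rfl⟩ := Finset.mem_image.mp hC
      exact (hGmem A hA).2.2.2
  have hBcard : B.card = d := by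
    have hd2 : Disjoint (P ∪ Q) (R \ G) := by
      rw [Finset.disjoint_left]
      intro C hC hC'
      have hCR := (Finset.mem_sdiff.mp hC').1
      rcases Finset.mem_union.mp hC with h | h
      · exact (hPmem C h).2.2.1 (hRmem C hCR).2.1
      · exact (hQmem C h).2.1 (hRmem C hCR).2.1
    have hd3 : Disjoint (P ∪ Q ∪ (R \ G)) (G.image (fun A => insert j (A.erase i))) := by
      rw [Finset.disjoint_left]
      intro C hC hC'
      have hC'' : C ∈ R.image (fun A => insert j (A.erase i)) :=
        Finset.image_subset_image hGR hC'
      obtain ⟨hjC, hiC, hCP⟩ := himgmem C hC''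
      rcases Finset.mem_union.mp hC with hC | hC
      · rcases Finset.mem_union.mp hC with h | h
        · exact hCP h
        · exact (hQmem C h).2.2 hjC
      · exact hiC (hRmem C (Finset.mem_sdiff.mp hC).1).2.1
    have hGcard : G.card ≤ R.card := Finset.card_le_card hGR
    rw [hBdef, Finset.card_union_of_disjoint hd3, Finset.card_union_of_disjoint hd2,
      Finset.card_union_of_disjoint hPQdisj, Finset.card_sdiff_of_subset hGR,
      Finset.card_image_of_injOn (hginj.mono (by exact_mod_cast hGR))]
    omega
  -- B's image under shift F j i contains T
  have hTB : T ⊆ B.image (shift F j i) := by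
    rw [hTdef]
    intro C hC
    rcases Finset.mem_union.mp hC with hC | hC
    · rcases Finset.mem_union.mp hC with h | h
      · refine Finset.mem_image.mpr ⟨C, ?_, ?_⟩
        · rw [hBdef]
          exact Finset.mem_union_left _ (Finset.mem_union_left _ (Finset.mem_union_left _ h))
        · exact shift_fixed (fun hc => (hPmem C h).2.2.1 hc.1)
      · refine Finset.mem_image.mpr ⟨C, ?_, ?_⟩
        · rw [hBdef]
          exact Finset.mem_union_left _ (Finset.mem_union_left _ (Finset.mem_union_right _ h))
        · exact shift_fixed (fun hc => (hQmem C h).2.1 hc.1)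
    · obtain ⟨A, hA, rfl⟩ := Finset.mem_image.mp hC
      obtain ⟨hAS, hiA, hjA⟩ := hRmem A hA
      by_cases hAG : A ∈ G
      · refine Finset.mem_image.mpr ⟨insert j (A.erase i), ?_, ?_⟩
        · rw [hBdef]
          exact Finset.mem_union_right _ (Finset.mem_image_of_mem _ hAG)
        · refine shift_fixed (fun hc => ?_)
          rcases Finset.mem_insert.mp hc.1 with h | h
          · exact hij h
          · exact (Finset.notMem_erase i A) h
      · refine Finset.mem_image.mpr ⟨A, ?_, ?_⟩
        · rw [hBdef]
          exact Finset.mem_union_left _ (Finset.mem_union_right _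
            (Finset.mem_sdiff.mpr ⟨hA, hAG⟩))
        · rcases shift_cases F j i A with h | ⟨_, _, _, h⟩
          · exfalso
            exact hAG (by rw [hGdef, Finset.mem_filter]; exact ⟨hA, h⟩)
          · exact h
  refine ⟨hclaim1, hBF, hBcard, ?_, ?_⟩
  · intro T' hT'B hT'card hT'sup
    exact hF T' (hT'B.trans hBF) hT'card hT'sup
  · intro hCIB
    exact absurd (hCIB T hTB hTcard hTsup) (Nat.not_le.mpr hTinf)
end

section
/- If F ⊆ binom([n],2) is a family of 2-subsets of [n] that is (3,4)-conditionally intersecting but not intersecting, then |F| ≤ n−2, with equality if and only if F is a twin 2-star. -/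
open Finset

lemma leaf_exists {n : ℕ} (F : Finset (Finset (Fin n)))
    (huniform : ∀ A ∈ F, A.card = 2)
    (hcond : ∀ S ⊆ F, S.card = 3 → (S.sup id).card ≤ 4 → (S.inf id).Nonempty) :
    ∀ E ∈ F, ∃ v ∈ E, ∀ E' ∈ F, v ∈ E' → E' = E := by
  intro E hE
  by_contra h
  push_neg at h
  obtain ⟨u, v, huv, hEuv⟩ := Finset.card_eq_two.mp (huniform E hE)
  obtain ⟨E₁, hE₁F, huE₁, hE₁ne⟩ := h u (by simp [hEuv])
  obtain ⟨E₂, hE₂F, hvE₂, hE₂ne⟩ := h v (by simp [hEuv])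
  -- other endpoints
  have hc1 : (E₁.erase u).card = 1 := by
    rw [Finset.card_erase_of_mem huE₁, huniform E₁ hE₁F]
  obtain ⟨p, hp⟩ := Finset.card_eq_one.mp hc1
  have hE₁eq : E₁ = {u, p} := by
    rw [← Finset.insert_erase huE₁, hp]
  have hc2 : (E₂.erase v).card = 1 := by
    rw [Finset.card_erase_of_mem hvE₂, huniform E₂ hE₂F]
  obtain ⟨q, hq⟩ := Finset.card_eq_one.mp hc2
  have hE₂eq : E₂ = {v, q} := by
    rw [← Finset.insert_erase hvE₂, hq]
  have hE₁E₂ : E₁ ≠ E₂ := by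
    intro heq
    apply hE₁ne
    apply (Finset.eq_of_subset_of_card_le ?_ ?_).symm
    · intro w hw
      rw [hEuv] at hw
      rcases Finset.mem_insert.mp hw with rfl | hw
      · exact huE₁
      · rw [Finset.mem_singleton] at hw; subst hw; rw [heq]; exact hvE₂
    · rw [huniform E₁ hE₁F, huniform E hE]
  set S : Finset (Finset (Fin n)) := {E, E₁, E₂} with hS
  have hSF : S ⊆ F := by
    intro X hX
    simp only [hS, Finset.mem_insert, Finset.mem_singleton] at hX
    rcases hX with rfl | rfl | rfl <;> assumption
  have hS3 : S.card = 3 := Finset.card_eq_three.mpr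
    ⟨E, E₁, E₂, Ne.symm hE₁ne, Ne.symm hE₂ne, hE₁E₂, rfl⟩
  have hsup : (S.sup id).card ≤ 4 := by
    have hsub : S.sup id ≤ {u, v, p, q} := by
      apply Finset.sup_le
      intro X hX
      simp only [hS, Finset.mem_insert, Finset.mem_singleton] at hX
      rcases hX with rfl | rfl | rfl
      · rw [id, hEuv]; intro w hw; simp at hw; rcases hw with rfl | rfl <;> simp
      · rw [id, hE₁eq]; intro w hw; simp at hw; rcases hw with rfl | rfl <;> simp
      · rw [id, hE₂eq]; intro w hw; simp at hw; rcases hw with rfl | rfl <;> simp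
    have h4 : ({u, v, p, q} : Finset (Fin n)).card ≤ 4 := by
      have h1 := Finset.card_insert_le u ({v, p, q} : Finset (Fin n))
      have h2 := Finset.card_insert_le v ({p, q} : Finset (Fin n))
      have h3 := Finset.card_insert_le p ({q} : Finset (Fin n))
      simp only [Finset.card_singleton] at *
      omega
    exact (Finset.card_le_card (Finset.le_iff_subset.mp hsub)).trans h4
  obtain ⟨w, hw⟩ := hcond S hSF hS3 hsup
  have hwE : w ∈ E ∧ w ∈ E₁ ∧ w ∈ E₂ := by
    simp only [hS, Finset.inf_insert, Finset.inf_singleton, id, Finset.inf_eq_inter,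
      Finset.mem_inter] at hw
    tauto
  obtain ⟨hw0, hw1, hw2⟩ := hwE
  rw [hEuv] at hw0
  rcases Finset.mem_insert.mp hw0 with rfl | hw0
  · -- w = u, u ∈ E₂ = {v, q}
    rw [hE₂eq] at hw2
    rcases Finset.mem_insert.mp hw2 with rfl | hw2
    · exact huv rfl
    · rw [Finset.mem_singleton] at hw2
      subst hw2
      exact hE₂ne (by rw [hE₂eq, hEuv, Finset.pair_comm])
  · rw [Finset.mem_singleton] at hw0
    subst hw0
    rw [hE₁eq] at hw1
    rcases Finset.mem_insert.mp hw1 with rfl | hw1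
    · exact huv rfl
    · rw [Finset.mem_singleton] at hw1
      subst hw1
      exact hE₁ne (by rw [hE₁eq, hEuv])

/-- A twin 2-star: for fixed distinct `x, y`, every member is a pair `{z, z'}` with
`z ∉ {x, y}` and `z' ∈ {x, y}`, and every `z ∉ {x, y}` lies in exactly one member. -/
def TwinStar {n : ℕ} (F : Finset (Finset (Fin n))) : Prop :=
  ∃ x y : Fin n, x ≠ y ∧
    (∀ A ∈ F, ∃ z : Fin n, z ≠ x ∧ z ≠ y ∧ (A = {z, x} ∨ A = {z, y})) ∧
    (∀ z : Fin n, z ≠ x → z ≠ y → ∃! A, A ∈ F ∧ z ∈ A)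

lemma twinstar_card {n : ℕ} (F : Finset (Finset (Fin n))) (h : TwinStar F) :
    F.card = n - 2 := by
  obtain ⟨x, y, hxy, h1, h2⟩ := h
  have hchoosemem : ∀ A (hA : A ∈ F), (h1 A hA).choose ∈ A := by
    intro A hA
    set z := (h1 A hA).choose
    rcases (h1 A hA).choose_spec.2.2 with h' | h' <;> rw [h'] <;>
      exact Finset.mem_insert_self _ _
  have key : F.card = (Finset.univ \ {x, y} : Finset (Fin n)).card := by
    apply Finset.card_bij (fun A hA => (h1 A hA).choose)
    · intro A hA
      obtain ⟨hzx, hzy, _⟩ := (h1 A hA).choose_spec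
      simp [hzx, hzy]
    · intro A₁ hA₁ A₂ hA₂ heq
      have hm1 : (h1 A₁ hA₁).choose ∈ A₁ := hchoosemem A₁ hA₁
      have hm2 : (h1 A₁ hA₁).choose ∈ A₂ := by rw [heq]; exact hchoosemem A₂ hA₂
      obtain ⟨hzx, hzy, _⟩ := (h1 A₁ hA₁).choose_spec
      exact ((h2 _ hzx hzy).unique ⟨hA₁, hm1⟩ ⟨hA₂, hm2⟩)
    · intro z hz
      simp only [Finset.mem_sdiff, Finset.mem_univ, true_and, Finset.mem_insert,
        Finset.mem_singleton, not_or] at hz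
      obtain ⟨A, ⟨hAF, hzA⟩, _⟩ := h2 z hz.1 hz.2
      refine ⟨A, hAF, ?_⟩
      obtain ⟨hzx, hzy, hzeq⟩ := (h1 A hAF).choose_spec
      rcases hzeq with h' | h' <;>
      · rw [h'] at hzA
        rcases Finset.mem_insert.mp hzA with h'' | h''
        · exact h''.symm
        · rw [Finset.mem_singleton] at h''; exact absurd h'' (by tauto)
  rw [key, Finset.card_sdiff_of_subset (Finset.subset_univ _), Finset.card_univ, Fintype.card_fin,
    Finset.card_insert_of_notMem (by simp [hxy]), Finset.card_singleton]

theorem stmt14 {n : ℕ} (F : Finset (Finset (Fin n)))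
    (huniform : ∀ A ∈ F, A.card = 2)
    (hcond : ∀ S ⊆ F, S.card = 3 → (S.sup id).card ≤ 4 → (S.inf id).Nonempty)
    (hnotint : ∃ A ∈ F, ∃ B ∈ F, A ∩ B = ∅) :
    F.card ≤ n - 2 ∧ (F.card = n - 2 ↔ TwinStar F) := by
  obtain ⟨A, hA, B, hB, hAB⟩ := hnotint
  have hleaf := leaf_exists F huniform hcond
  have hABne : A ≠ B := by
    intro h
    have h2 : A.card = 2 := huniform A hA
    rw [h, Finset.inter_self] at hAB
    rw [h, hAB] at h2
    simp at h2
  have hdisj : ∀ w, w ∈ A → w ∈ B → False := by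
    intro w h1 h2
    have : w ∈ A ∩ B := Finset.mem_inter.mpr ⟨h1, h2⟩
    rw [hAB] at this
    exact absurd this (Finset.notMem_empty w)
  obtain ⟨a', ha'A, ha'leaf⟩ := hleaf A hA
  obtain ⟨b', hb'B, hb'leaf⟩ := hleaf B hB
  obtain ⟨x, hx⟩ := Finset.card_eq_one.mp
    (by rw [Finset.card_erase_of_mem ha'A, huniform A hA] : (A.erase a').card = 1)
  obtain ⟨y, hy⟩ := Finset.card_eq_one.mp
    (by rw [Finset.card_erase_of_mem hb'B, huniform B hB] : (B.erase b').card = 1)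
  have hxmem : x ∈ A.erase a' := hx ▸ Finset.mem_singleton_self x
  have hymem : y ∈ B.erase b' := hy ▸ Finset.mem_singleton_self y
  have hxA : x ∈ A := Finset.mem_of_mem_erase hxmem
  have hyB : y ∈ B := Finset.mem_of_mem_erase hymem
  have hxa' : x ≠ a' := Finset.ne_of_mem_erase hxmem
  have hyb' : y ≠ b' := Finset.ne_of_mem_erase hymem
  have hxy : x ≠ y := fun h => hdisj x hxA (h ▸ hyB)
  classical
  set ℓ : Finset (Fin n) → Fin n := fun E =>
    if E = A then a' else if E = B then b'
    else if h : E ∈ F then (hleaf E h).choose else x with hℓ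
  have hℓA : ℓ A = a' := by rw [hℓ]; simp
  have hℓB : ℓ B = b' := by rw [hℓ]; simp [Ne.symm hABne]
  have hℓother : ∀ E, E ≠ A → E ≠ B → ∀ hE : E ∈ F, ℓ E = (hleaf E hE).choose := by
    intro E h1 h2 hE
    rw [hℓ]
    simp [h1, h2, hE]
  have hℓmem : ∀ E ∈ F, ℓ E ∈ E := by
    intro E hE
    by_cases h1 : E = A
    · subst h1; rw [hℓA]; exact ha'A
    by_cases h2 : E = B
    · subst h2; rw [hℓB]; exact hb'B
    · rw [hℓother E h1 h2 hE]
      exact (hleaf E hE).choose_spec.1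
  have hℓleaf : ∀ E ∈ F, ∀ E' ∈ F, ℓ E ∈ E' → E' = E := by
    intro E hE E' hE' hmem
    by_cases h1 : E = A
    · subst h1; rw [hℓA] at hmem; exact ha'leaf E' hE' hmem
    by_cases h2 : E = B
    · subst h2; rw [hℓB] at hmem; exact hb'leaf E' hE' hmem
    · rw [hℓother E h1 h2 hE] at hmem
      exact (hleaf E hE).choose_spec.2 E' hE' hmem
  have hℓxy : ∀ E ∈ F, ℓ E ≠ x ∧ ℓ E ≠ y := by
    intro E hE
    constructor
    · intro h
      have hEA : A = E := hℓleaf E hE A hA (by rw [h]; exact hxA)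
      rw [← hEA, hℓA] at h
      exact hxa' h.symm
    · intro h
      have hEB : B = E := hℓleaf E hE B hB (by rw [h]; exact hyB)
      rw [← hEB, hℓB] at h
      exact hyb' h.symm
  have hinj : Set.InjOn ℓ F := by
    intro E hE E' hE' heq
    refine (hℓleaf E hE E' hE' ?_).symm
    rw [heq]; exact hℓmem E' hE'
  have hmaps : ∀ E ∈ F, ℓ E ∈ (Finset.univ \ {x, y} : Finset (Fin n)) := by
    intro E hE
    obtain ⟨h1, h2⟩ := hℓxy E hE
    simp [h1, h2]
  have hcxy : (Finset.univ \ {x, y} : Finset (Fin n)).card = n - 2 := by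
    rw [Finset.card_sdiff_of_subset (Finset.subset_univ _), Finset.card_univ, Fintype.card_fin,
      Finset.card_insert_of_notMem (by simp [hxy]), Finset.card_singleton]
  have hbound : F.card ≤ n - 2 := by
    rw [← hcxy]
    exact Finset.card_le_card_of_injOn ℓ hmaps hinj
  refine ⟨hbound, ?_, twinstar_card F⟩
  intro hcard
  have himg : F.image ℓ = Finset.univ \ {x, y} := by
    apply Finset.eq_of_subset_of_card_le
    · intro z hz
      obtain ⟨E, hE, rfl⟩ := Finset.mem_image.mp hz
      exact hmaps E hE
    · rw [Finset.card_image_of_injOn hinj, hcxy, hcard]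
  refine ⟨x, y, hxy, ?_, ?_⟩
  · intro A' hA'
    refine ⟨ℓ A', (hℓxy A' hA').1, (hℓxy A' hA').2, ?_⟩
    obtain ⟨w, hw⟩ := Finset.card_eq_one.mp
      (by rw [Finset.card_erase_of_mem (hℓmem A' hA'), huniform A' hA'] :
        (A'.erase (ℓ A')).card = 1)
    have hwmem : w ∈ A'.erase (ℓ A') := hw ▸ Finset.mem_singleton_self w
    have hwA' : w ∈ A' := Finset.mem_of_mem_erase hwmem
    have hwne : w ≠ ℓ A' := Finset.ne_of_mem_erase hwmem
    have hA'eq : A' = {ℓ A', w} := by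
      have h1 := Finset.insert_erase (hℓmem A' hA')
      rw [hw] at h1
      exact h1.symm
    have hwxy : w = x ∨ w = y := by
      by_contra hc
      push_neg at hc
      have hwimg : w ∈ F.image ℓ := by
        rw [himg]; simp [hc.1, hc.2]
      obtain ⟨E, hE, hEw⟩ := Finset.mem_image.mp hwimg
      have hlEA' : ℓ E ∈ A' := by rw [hEw]; exact hwA'
      have hAE : A' = E := hℓleaf E hE A' hA' hlEA'
      have : ℓ A' = w := by rw [hAE, hEw]
      exact hwne this.symm
    rcases hwxy with h' | h'
    · left; rw [h'] at hA'eq; exact hA'eq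
    · right; rw [h'] at hA'eq; exact hA'eq
  · intro z hzx hzy
    have hzimg : z ∈ F.image ℓ := by rw [himg]; simp [hzx, hzy]
    obtain ⟨E, hE, hEz⟩ := Finset.mem_image.mp hzimg
    refine ⟨E, ⟨hE, by rw [← hEz]; exact hℓmem E hE⟩, ?_⟩
    rintro A' ⟨hA'F, hzA'⟩
    exact hℓleaf E hE A' hA'F (by rw [hEz]; exact hzA')
end

section
/- Let [n] be partitioned into parts X_1,...,X_r with r ≤ k, let x_1,...,x_r be nonnegative integers with x_1 + ⋯ + x_r ≤ k, and let G_r = {A ∈ binom([n],k) : |A ∩ X_i| ≥ x_i for all i}. If G_r is not d-wise intersecting, then G_r is (d,s)-conditionally intersecting where s = max{⌈dk/(d−1)⌉ − 1, Σ_{i=1}^r ⌈d x_i/(d−1)⌉ − 1}. -/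
open Finset

/-- The family of all `k`-subsets `A` of `Fin n` with `|A ∩ X i| ≥ x i` for all `i`. -/
def GFam {n r : ℕ} (k : ℕ) (X : Fin r → Finset (Fin n)) (x : Fin r → ℕ) :
    Finset (Finset (Fin n)) :=
  ((Finset.univ : Finset (Fin n)).powersetCard k).filter fun A => ∀ i, x i ≤ (A ∩ X i).card

theorem stmt16 {n k d r : ℕ} (hd : 2 ≤ d) (hrk : r ≤ k)
    (X : Fin r → Finset (Fin n)) (hpart : ∀ a : Fin n, ∃! i, a ∈ X i)
    (x : Fin r → ℕ) (hx : ∑ i, x i ≤ k)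
    (hnotint : ¬ ∀ f : Fin d → Finset (Fin n),
      (∀ l, f l ∈ GFam k X x) → (Finset.univ.inf f).Nonempty) :
    ∀ S ⊆ GFam k X x, S.card = d →
      (S.sup id).card ≤
        max ((d * k + d - 2) / (d - 1) - 1) ((∑ i, (d * x i + d - 2) / (d - 1)) - 1) →
      (S.inf id).Nonempty := by
  intro S hS hcard hle
  by_contra hne
  set U := S.sup id with hU
  have hd1 : 0 < d - 1 := by omega
  -- membership facts
  have hmem : ∀ A ∈ S, A.card = k ∧ ∀ i, x i ≤ (A ∩ X i).card := by
    intro A hA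
    have h := hS hA
    simp only [GFam, Finset.mem_filter, Finset.mem_powersetCard] at h
    exact ⟨h.1.2, h.2⟩
  -- k ≥ 1
  have hk : 1 ≤ k := by
    by_contra hk0
    have hk0 : k = 0 := by omega
    have hsub : S ⊆ {∅} := by
      intro A hA
      have := (hmem A hA).1
      simp [hk0, Finset.card_eq_zero] at this
      simp [this]
    have := Finset.card_le_card hsub
    simp at this
    omega
  -- since the intersection is empty, each point lies in ≤ d-1 members of S
  have hcnt : ∀ a : Fin n, (S.filter (fun A => a ∈ A)).card ≤ d - 1 := by
    intro a
    by_contra hgt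
    have hsub : S.filter (fun A => a ∈ A) ⊆ S := Finset.filter_subset _ _
    have hle' : (S.filter (fun A => a ∈ A)).card ≤ d := hcard ▸ Finset.card_le_card hsub
    have heq : S.filter (fun A => a ∈ A) = S := by
      apply Finset.eq_of_subset_of_card_le hsub
      omega
    have hall : ∀ A ∈ S, a ∈ A := by
      intro A hA
      have : A ∈ S.filter (fun A => a ∈ A) := by rw [heq]; exact hA
      exact (Finset.mem_filter.mp this).2
    exact hne ⟨a, Finset.mem_inf.mpr (fun A hA => hall A hA)⟩
  -- double counting lemma
  have hdouble : ∀ T : Finset (Fin n),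
      (∑ A ∈ S, (A ∩ T).card) = ∑ a ∈ T, (S.filter (fun A => a ∈ A)).card := by
    intro T
    have h1 : ∀ A : Finset (Fin n), (A ∩ T).card = ∑ a ∈ T, if a ∈ A then 1 else 0 := by
      intro A
      rw [Finset.inter_comm, ← Finset.filter_mem_eq_inter, Finset.card_filter]
    have h2 : ∀ a : Fin n, (S.filter (fun A => a ∈ A)).card
        = ∑ A ∈ S, if a ∈ A then 1 else 0 := fun a => Finset.card_filter _ _
    simp only [h1, h2]
    rw [Finset.sum_comm]
  -- count ≤ (d-1) * |T ∩ U| for any T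
  have hbound : ∀ T : Finset (Fin n),
      (∑ a ∈ T, (S.filter (fun A => a ∈ A)).card) ≤ (d - 1) * (T ∩ U).card := by
    intro T
    have hzero : ∀ a ∈ T, a ∉ U → (S.filter (fun A => a ∈ A)).card = 0 := by
      intro a _ haU
      rw [Finset.card_eq_zero, Finset.filter_eq_empty_iff]
      intro A hA haA
      exact haU (Finset.le_sup (f := id) hA haA)
    calc (∑ a ∈ T, (S.filter (fun A => a ∈ A)).card)
        = ∑ a ∈ T ∩ U, (S.filter (fun A => a ∈ A)).card := by
          rw [← Finset.filter_mem_eq_inter]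
          rw [Finset.sum_filter_of_ne]
          intro a ha hne0
          by_contra haU
          exact hne0 (hzero a ha haU)
      _ ≤ ∑ a ∈ T ∩ U, (d - 1) := Finset.sum_le_sum (fun a _ => hcnt a)
      _ = (T ∩ U).card * (d - 1) := by rw [Finset.sum_const, smul_eq_mul]
      _ = (d - 1) * (T ∩ U).card := Nat.mul_comm _ _
  -- d * k ≤ (d-1) * |U|
  have hKU : d * k ≤ (d - 1) * U.card := by
    have h1 : d * k = ∑ A ∈ S, A.card := by
      rw [Finset.sum_congr rfl (fun A hA => (hmem A hA).1), Finset.sum_const, hcard,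
        smul_eq_mul]
    have h2 : ∀ A ∈ S, A.card = (A ∩ U).card := by
      intro A hA
      exact congrArg Finset.card (Finset.inter_eq_left.mpr (Finset.le_sup (f := id) hA)).symm
    calc d * k = ∑ A ∈ S, (A ∩ U).card := by rw [h1]; exact Finset.sum_congr rfl h2
      _ = ∑ a ∈ U, (S.filter (fun A => a ∈ A)).card := hdouble U
      _ ≤ (d - 1) * (U ∩ U).card := hbound U
      _ = (d - 1) * U.card := by rw [Finset.inter_self]
  -- d * x i ≤ (d-1) * |X i ∩ U|
  have hXi : ∀ i, d * x i ≤ (d - 1) * (X i ∩ U).card := by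
    intro i
    calc d * x i = ∑ _A ∈ S, x i := by rw [Finset.sum_const, hcard, smul_eq_mul]
      _ ≤ ∑ A ∈ S, (A ∩ X i).card := Finset.sum_le_sum (fun A hA => (hmem A hA).2 i)
      _ = ∑ a ∈ X i, (S.filter (fun A => a ∈ A)).card := hdouble (X i)
      _ ≤ (d - 1) * (X i ∩ U).card := hbound (X i)
  -- partition: ∑ i, |X i ∩ U| = |U|
  have hpartsum : (∑ i, (X i ∩ U).card) = U.card := by
    have h1 : ∀ i : Fin r, (X i ∩ U).card = ∑ a ∈ U, if a ∈ X i then 1 else 0 := by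
      intro i
      rw [Finset.inter_comm, ← Finset.filter_mem_eq_inter, Finset.card_filter]
    simp only [h1]
    rw [Finset.sum_comm]
    have h2 : ∀ a : Fin n, (∑ i : Fin r, if a ∈ X i then 1 else 0) = 1 := by
      intro a
      obtain ⟨i₀, hi₀, huniq⟩ := hpart a
      rw [← Finset.card_filter, Finset.card_eq_one]
      refine ⟨i₀, ?_⟩
      ext j
      simp only [Finset.mem_filter, Finset.mem_univ, true_and, Finset.mem_singleton]
      constructor
      · exact huniq j
      · rintro rfl; exact hi₀
    simp only [h2]
    rw [Finset.sum_const, Finset.card_def, smul_eq_mul, mul_one]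
  -- derive the two lower bounds on |U|
  have hU1 : (d * k + d - 2) / (d - 1) ≤ U.card := by
    rw [Nat.div_le_iff_le_mul_add_pred hd1]
    omega
  have hU2 : (∑ i, (d * x i + d - 2) / (d - 1)) ≤ U.card := by
    rw [← hpartsum]
    refine Finset.sum_le_sum (fun i _ => ?_)
    rw [Nat.div_le_iff_le_mul_add_pred hd1]
    have := hXi i
    omega
  have hK2 : 2 ≤ (d * k + d - 2) / (d - 1) := by
    rw [Nat.le_div_iff_mul_le hd1]
    have : d ≤ d * k := Nat.le_mul_of_pos_right d hk
    omega
  rcases le_max_iff.mp hle with h | h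
  · omega
  · omega
end
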